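/- arXiv:1705.11019 — 2 statements merged into one kernel-verified Lean document; each statement's English description precedes it below -/
import Mathlib

section
/- Let (J, N, ♯, T, 1) be a cubic norm structure over K, let σ be a ring automorphism of K, let φ be a σ-semilinear autotopy of J, and let δ := N(φ(1)). Then for all a, b ∈ J: N(φ(a)) = δ·σ(N(a)) and σ(T(φ̌(a), b)) = T(a, φ(b)). -/
/-- A cubic norm structure over a commutative ring `K`. -/
structure CubicNormStructure (K : Type*) [CommRing K]
    (J : Type*) [AddCommGroup J] [Module K J] where
  N : J → K
  sharp : J → J
  T : J → J → K
  one : J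
  one_ne_zero : one ≠ 0
  T_add_left : ∀ a b c : J, T (a + b) c = T a c + T b c
  T_smul_left : ∀ (t : K) (a b : J), T (t • a) b = t * T a b
  T_symm : ∀ a b : J, T a b = T b a
  sharp_smul : ∀ (t : K) (a : J), sharp (t • a) = t ^ 2 • sharp a
  N_smul : ∀ (t : K) (a : J), N (t • a) = t ^ 3 * N a
  N_add : ∀ a b : J, N (a + b) = N a + T b (sharp a) + T a (sharp b) + N b
  sharp_sharp : ∀ a : J, sharp (sharp a) = N a • a
  sharp_one : sharp one = one
  one_cross : ∀ b : J, b = T b one • one - (sharp (one + b) - sharp one - sharp b)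

namespace CubicNormStructure

variable {K : Type*} [CommRing K] {J : Type*} [AddCommGroup J] [Module K J]

/-- The linearization `a × b` of the adjoint map. -/
def cross (S : CubicNormStructure K J) (a b : J) : J :=
  S.sharp (a + b) - S.sharp a - S.sharp b

/-- The `U`-operator `U_a(b) = T(a,b)•a − a♯ × b`. -/
def U (S : CubicNormStructure K J) (a b : J) : J :=
  S.T a b • a - S.cross (S.sharp a) b

end CubicNormStructure

/-!
The axioms control `♯` and `×` only through `T`, so every identity below is an identity of
`T`-pairings. With `z = φ 1` and `δ = N z`, linearizing the autotopy condition and pairing with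
`z♯` gives `T(φ x, z♯) = δ σ(T(x, 1))` and `T(z, φ x × φ y) = δ σ(T(1, x × y))`. Together
with `a♯ × (a × b) = N(a) b + T(b, a♯) a` these give `T(φ x, (φ y)♯) = δ σ(T(x, y♯))`, and
`T(x, x♯) = 3 N(x)` yields the norm formula. For the adjoint, `U_{z♯}` is `T`-symmetric,
`U_{z♯} U_z = δ²` in weak form, and `T(φ q, U_{z♯} (φ p)) = δ² σ(T(q, p))`.
-/

theorem eq_zero_of_forall_mul_add_mul_sq_add_mul_pow_three {K : Type*} [CommRing K]
    (h2 : IsUnit (2 : K)) (h3 : IsUnit (3 : K)) {c₁ c₂ c₃ : K}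
    (h : ∀ t : K, c₁ * t + c₂ * t ^ 2 + c₃ * t ^ 3 = 0) : c₁ = 0 := by
  have h₁ := h 1
  have hm := h (-1)
  have h₂ := h 2
  have hc₂ : c₂ = 0 := h2.mul_left_cancel (by linear_combination h₁ + hm)
  have hc₃ : c₃ = 0 :=
    h3.mul_left_cancel (h2.mul_left_cancel (by linear_combination h₂ - 2 * h₁ - 2 * hc₂))
  linear_combination h₁ - hc₂ - hc₃

namespace CubicNormStructure

variable {K : Type*} [CommRing K] {J : Type*} [AddCommGroup J] [Module K J]

section

variable (S : CubicNormStructure K J)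

theorem T_add_right (a b c : J) : S.T a (b + c) = S.T a b + S.T a c := by
  rw [S.T_symm, S.T_add_left, S.T_symm b, S.T_symm c]

theorem T_smul_right (t : K) (a b : J) : S.T a (t • b) = t * S.T a b := by
  rw [S.T_symm, S.T_smul_left, S.T_symm b]

theorem T_sub_right (a b c : J) : S.T a (b - c) = S.T a b - S.T a c := by
  rw [sub_eq_add_neg, S.T_add_right, ← neg_one_smul K c, S.T_smul_right]
  ring

theorem cross_comm (a b : J) : S.cross a b = S.cross b a := by
  unfold cross
  rw [add_comm]
  abel

theorem sharp_add (a b : J) : S.sharp (a + b) = S.sharp a + S.sharp b + S.cross a b := by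
  unfold cross
  abel

theorem cross_self (a : J) : S.cross a a = (2 : K) • S.sharp a := by
  unfold cross
  rw [← two_smul K a, S.sharp_smul]
  module

theorem cross_one (b : J) : S.cross S.one b = S.T b S.one • S.one - b := by
  have h := S.one_cross b
  rw [← cross] at h
  linear_combination (norm := module) h

theorem N_add_smul (t : K) (a b : J) :
    S.N (a + t • b) =
      S.N a + t * S.T b (S.sharp a) + t ^ 2 * S.T a (S.sharp b) + t ^ 3 * S.N b := by
  rw [S.N_add, S.T_smul_left, S.sharp_smul, S.T_smul_right, S.N_smul]

/-- The cubic form `T(c, a × b)` is the polarization of `3 N`, hence symmetric. -/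
theorem T_cross_rotate (a b c : J) : S.T c (S.cross a b) = S.T a (S.cross b c) := by
  have h1 := S.N_add (a + b) c
  have h2 := S.N_add a (b + c)
  rw [add_assoc] at h1
  rw [S.sharp_add a b, S.T_add_right, S.T_add_right, S.T_add_left] at h1
  rw [S.sharp_add b c, S.T_add_right, S.T_add_right, S.T_add_left] at h2
  linear_combination h2 - h1 - S.N_add a b + S.N_add b c

theorem T_cross_swap (c a b : J) : S.T c (S.cross a b) = S.T b (S.cross c a) :=
  (S.T_cross_rotate a b c).trans (S.T_cross_rotate b c a)

theorem T_cross_add_right (c a x y : J) :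
    S.T c (S.cross a (x + y)) = S.T c (S.cross a x) + S.T c (S.cross a y) := by
  rw [S.T_cross_swap c a (x + y), S.T_add_left, ← S.T_cross_swap c a x, ← S.T_cross_swap c a y]

theorem T_cross_smul_right (c a : J) (t : K) (x : J) :
    S.T c (S.cross a (t • x)) = t * S.T c (S.cross a x) := by
  rw [S.T_cross_swap, S.T_smul_left, ← S.T_cross_swap]

theorem T_cross_sub_right (c a x y : J) :
    S.T c (S.cross a (x - y)) = S.T c (S.cross a x) - S.T c (S.cross a y) := by
  rw [sub_eq_add_neg, S.T_cross_add_right, ← neg_one_smul K y, S.T_cross_smul_right]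
  ring

theorem T_cross_add_left (c a b x : J) :
    S.T c (S.cross (a + b) x) = S.T c (S.cross a x) + S.T c (S.cross b x) := by
  rw [S.cross_comm (a + b), S.T_cross_add_right, S.cross_comm x a, S.cross_comm x b]

theorem T_cross_smul_left (c : J) (t : K) (a x : J) :
    S.T c (S.cross (t • a) x) = t * S.T c (S.cross a x) := by
  rw [S.cross_comm (t • a), S.T_cross_smul_right, S.cross_comm x a]

theorem T_cross_self (u x : J) : S.T u (S.cross x x) = 2 * S.T u (S.sharp x) := by
  rw [S.cross_self, S.T_smul_right]

theorem T_cross_cross_smul_right (u x a : J) (t : K) (b : J) :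
    S.T u (S.cross x (S.cross a (t • b))) = t * S.T u (S.cross x (S.cross a b)) := by
  rw [S.T_cross_swap, S.T_symm, S.T_cross_smul_right, S.T_symm, ← S.T_cross_swap]

theorem T_cross_cross_smul_left (u a : J) (t : K) (b y : J) :
    S.T u (S.cross (S.cross a (t • b)) y) = t * S.T u (S.cross (S.cross a b) y) := by
  rw [S.cross_comm, S.T_cross_cross_smul_right, S.cross_comm y]

theorem T_eq_T_one_mul_T_one_sub (a b : J) :
    S.T a b = S.T a S.one * S.T b S.one - S.T S.one (S.cross a b) := by
  conv_lhs => rw [S.one_cross b]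
  rw [← cross, S.T_sub_right, S.T_smul_right, S.T_cross_rotate S.one b a, S.cross_comm b a]
  ring

theorem T_sharp_self (h2 : IsUnit (2 : K)) (x : J) : S.T x (S.sharp x) = 3 * S.N x := by
  have h := S.N_add x x
  rw [← two_smul K x, S.N_smul] at h
  exact h2.mul_left_cancel (by linear_combination -h)

theorem N_sharp (h2 : IsUnit (2 : K)) (h3 : IsUnit (3 : K)) (x : J) :
    S.N (S.sharp x) = S.N x ^ 2 := by
  have h := S.T_sharp_self h2 (S.sharp x)
  rw [S.sharp_sharp, S.T_smul_right, S.T_symm, S.T_sharp_self h2] at h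
  exact h3.mul_left_cancel (by linear_combination -h)

theorem T_cross_sharp_sharp_add_smul (u a b : J) (t : K) :
    S.T u (S.cross (S.sharp (a + t • b)) (S.sharp (a + t • b))) =
      2 * (S.N a * S.T a u)
        + t * (2 * S.T u (S.cross (S.sharp a) (S.cross a b)))
        + t ^ 2 * (S.T u (S.cross (S.cross a b) (S.cross a b))
            + 2 * S.T u (S.cross (S.sharp a) (S.sharp b)))
        + t ^ 3 * (2 * S.T u (S.cross (S.cross a b) (S.sharp b)))
        + t ^ 4 * (2 * (S.N b * S.T b u)) := by
  rw [S.sharp_add, S.sharp_smul]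
  simp only [S.T_cross_add_left, S.T_cross_add_right, S.T_cross_smul_left,
    S.T_cross_smul_right, S.T_cross_cross_smul_left, S.T_cross_cross_smul_right]
  rw [S.cross_comm (S.sharp b) (S.sharp a), S.cross_comm (S.cross a b) (S.sharp a),
    S.cross_comm (S.sharp b) (S.cross a b), S.T_cross_self u (S.sharp a),
    S.T_cross_self u (S.sharp b), S.sharp_sharp, S.sharp_sharp, S.T_smul_right,
    S.T_smul_right, S.T_symm u a, S.T_symm u b]
  ring

/-- The weak form of `a♯ × (a × b) = N(a) b + T(b, a♯) a`, the linearization of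
`a♯♯ = N(a) a`. -/
theorem T_cross_sharp_cross (h2 : IsUnit (2 : K)) (h3 : IsUnit (3 : K)) (a b u : J) :
    S.T u (S.cross (S.sharp a) (S.cross a b)) =
      S.N a * S.T b u + S.T b (S.sharp a) * S.T a u := by
  have hcoeff := eq_zero_of_forall_mul_add_mul_sq_add_mul_pow_three h2 h3
    (c₁ := 2 * S.T u (S.cross (S.sharp a) (S.cross a b))
      - 2 * (S.N a * S.T b u + S.T b (S.sharp a) * S.T a u))
    (c₂ := S.T u (S.cross (S.cross a b) (S.cross a b))
      + 2 * S.T u (S.cross (S.sharp a) (S.sharp b))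
      - 2 * (S.T a (S.sharp b) * S.T a u + S.T b (S.sharp a) * S.T b u))
    (c₃ := 2 * S.T u (S.cross (S.cross a b) (S.sharp b))
      - 2 * (S.N b * S.T a u + S.T a (S.sharp b) * S.T b u))
    fun t => by
      have h := S.T_cross_sharp_sharp_add_smul u a b t
      rw [S.T_cross_self, S.sharp_sharp, S.T_smul_right, S.N_add_smul, S.T_symm u,
        S.T_add_left, S.T_smul_left] at h
      linear_combination -h
  exact h2.mul_left_cancel (by linear_combination hcoeff)

theorem T_U (a c w : J) :
    S.T w (S.U a c) = S.T a c * S.T a w - S.T c (S.cross (S.sharp a) w) := by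
  rw [U, S.T_sub_right, S.T_smul_right, S.T_symm w a, S.T_cross_swap w (S.sharp a) c,
    S.cross_comm w (S.sharp a)]

theorem T_U_comm (a c w : J) : S.T w (S.U a c) = S.T c (S.U a w) := by
  rw [S.T_U, S.T_U, S.T_cross_rotate (S.sharp a) w c, S.T_cross_rotate (S.sharp a) c w,
    S.cross_comm w c]
  ring

theorem T_U_sharp (a c w : J) :
    S.T w (S.U (S.sharp a) c) =
      S.T (S.sharp a) c * S.T (S.sharp a) w - S.N a * S.T c (S.cross a w) := by
  rw [S.T_U, S.sharp_sharp, S.T_cross_smul_left]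

theorem T_sharp_U (h2 : IsUnit (2 : K)) (a c : J) :
    S.T (S.sharp a) (S.U a c) = S.N a * S.T a c := by
  rw [S.T_U, S.T_cross_self, S.sharp_sharp, S.T_smul_right, S.T_sharp_self h2, S.T_symm c a]
  ring

theorem T_cross_cross_sharp (h2 : IsUnit (2 : K)) (h3 : IsUnit (3 : K)) {a : J}
    (ha : IsUnit (S.N a)) (c u : J) :
    S.T u (S.cross a (S.cross (S.sharp a) c)) =
      S.N a * S.T c u + S.T c a * S.T (S.sharp a) u := by
  have h := S.T_cross_sharp_cross h2 h3 (S.sharp a) c u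
  rw [S.sharp_sharp, S.N_sharp h2 h3, S.T_cross_smul_left, S.T_smul_right] at h
  exact ha.mul_left_cancel (by linear_combination h)

theorem T_U_sharp_U (h2 : IsUnit (2 : K)) (h3 : IsUnit (3 : K)) {a : J}
    (ha : IsUnit (S.N a)) (c w : J) :
    S.T w (S.U (S.sharp a) (S.U a c)) = S.N a ^ 2 * S.T c w := by
  have h : S.T (S.U a c) (S.cross a w) =
      S.T a c * (2 * S.T w (S.sharp a)) - (S.N a * S.T c w + S.T c a * S.T (S.sharp a) w) := by
    rw [S.T_cross_swap, S.cross_comm _ a, U, S.T_cross_sub_right, S.T_cross_smul_right,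
      S.T_cross_self, S.T_cross_cross_sharp h2 h3 ha]
  rw [S.T_U_sharp, S.T_sharp_U h2, h, S.T_symm w (S.sharp a), S.T_symm c a]
  ring

end

/-- A `σ`-semilinear map with `z = φ 1` invertible and `φ(a♯) = φ(a)^{♯_z}`: the paper's
autotopies, without bijectivity. -/
structure IsAutotopy (S : CubicNormStructure K J) (σ : K ≃+* K) (φ : J → J) : Prop where
  map_add : ∀ a b : J, φ (a + b) = φ a + φ b
  map_smul : ∀ (t : K) (a : J), φ (t • a) = σ t • φ a
  isUnit_N_map_one : IsUnit (S.N (φ S.one))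
  map_sharp : ∀ a : J,
    φ (S.sharp a) = Ring.inverse (S.N (φ S.one)) • S.U (φ S.one) (S.sharp (φ a))

namespace IsAutotopy

variable {S : CubicNormStructure K J} {σ : K ≃+* K} {φ : J → J}

theorem map_sub (hφ : S.IsAutotopy σ φ) (a b : J) : φ (a - b) = φ a - φ b :=
  (AddMonoidHom.mk' φ hφ.map_add).map_sub a b

theorem smul_map_sharp (hφ : S.IsAutotopy σ φ) (a : J) :
    S.N (φ S.one) • φ (S.sharp a) = S.U (φ S.one) (S.sharp (φ a)) := by
  rw [hφ.map_sharp, smul_smul, Ring.mul_inverse_cancel _ hφ.isUnit_N_map_one, one_smul]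

theorem T_map_cross (hφ : S.IsAutotopy σ φ) (x y w : J) :
    S.N (φ S.one) * S.T w (φ (S.cross x y)) = S.T w (S.U (φ S.one) (S.cross (φ x) (φ y))) := by
  rw [← S.T_smul_right, cross, hφ.map_sub, hφ.map_sub, smul_sub, smul_sub, hφ.smul_map_sharp,
    hφ.smul_map_sharp, hφ.smul_map_sharp, hφ.map_add, S.T_sub_right, S.T_sub_right, S.T_U,
    S.T_U, S.T_U, S.T_U, S.sharp_add (φ x), S.T_add_right, S.T_add_right, S.T_add_left,
    S.T_add_left]
  ring

theorem T_map_sharp_one (hφ : S.IsAutotopy σ φ) (h2 : IsUnit (2 : K)) (h3 : IsUnit (3 : K))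
    (x : J) : S.T (φ x) (S.sharp (φ S.one)) = S.N (φ S.one) * σ (S.T x S.one) := by
  have hcross : φ (S.cross x S.one) = σ (S.T x S.one) • φ S.one - φ x := by
    rw [S.cross_comm, S.cross_one, hφ.map_sub, hφ.map_smul]
  have h := hφ.T_map_cross x S.one (S.sharp (φ S.one))
  rw [hcross, S.T_sub_right, S.T_smul_right, S.T_symm _ (φ S.one), S.T_sharp_self h2,
    S.T_sharp_U h2, S.T_cross_rotate, S.T_cross_self, S.T_symm (S.sharp _)] at h
  exact h3.mul_left_cancel (hφ.isUnit_N_map_one.mul_left_cancel (by linear_combination -h))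

theorem T_map_one_cross (hφ : S.IsAutotopy σ φ) (h2 : IsUnit (2 : K)) (h3 : IsUnit (3 : K))
    (x y : J) :
    S.T (φ S.one) (S.cross (φ x) (φ y)) = S.N (φ S.one) * σ (S.T S.one (S.cross x y)) := by
  have h := hφ.T_map_cross x y (S.sharp (φ S.one))
  rw [S.T_sharp_U h2, S.T_symm _ (φ _), hφ.T_map_sharp_one h2 h3, S.T_symm _ S.one] at h
  exact (hφ.isUnit_N_map_one.mul_left_cancel h).symm

theorem T_map_one_sharp (hφ : S.IsAutotopy σ φ) (h2 : IsUnit (2 : K)) (h3 : IsUnit (3 : K))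
    (y : J) : S.T (φ S.one) (S.sharp (φ y)) = S.N (φ S.one) * σ (S.T (S.sharp y) S.one) := by
  have h := congrArg (S.T (S.sharp (φ S.one))) (hφ.smul_map_sharp y)
  rw [S.T_smul_right, S.T_sharp_U h2, S.T_symm _ (φ _), hφ.T_map_sharp_one h2 h3] at h
  exact (hφ.isUnit_N_map_one.mul_left_cancel h).symm

theorem T_sharp_map (hφ : S.IsAutotopy σ φ) (h2 : IsUnit (2 : K)) (h3 : IsUnit (3 : K))
    (y u : J) :
    S.T (S.sharp (φ y)) u = σ (S.T (S.sharp y) S.one) * S.T (S.sharp (φ S.one)) u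
      - S.T u (S.cross (φ S.one) (φ (S.sharp y))) := by
  have hcross : S.cross (S.sharp (φ S.one)) (S.sharp (φ y)) =
      S.T (φ S.one) (S.sharp (φ y)) • φ S.one - S.N (φ S.one) • φ (S.sharp y) := by
    rw [hφ.smul_map_sharp, U]
    abel
  have h := S.T_cross_cross_sharp h2 h3 hφ.isUnit_N_map_one (S.sharp (φ y)) u
  rw [hcross, S.T_cross_sub_right, S.T_cross_smul_right, S.T_cross_smul_right, S.T_cross_self,
    S.T_symm _ (φ S.one), hφ.T_map_one_sharp h2 h3, S.T_symm u] at h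
  exact hφ.isUnit_N_map_one.mul_left_cancel (by linear_combination -h)

theorem T_map_sharp_map (hφ : S.IsAutotopy σ φ) (h2 : IsUnit (2 : K)) (h3 : IsUnit (3 : K))
    (x y : J) : S.T (φ x) (S.sharp (φ y)) = S.N (φ S.one) * σ (S.T x (S.sharp y)) := by
  rw [S.T_symm, hφ.T_sharp_map h2 h3, S.T_symm _ (φ x), hφ.T_map_sharp_one h2 h3,
    S.T_cross_rotate, hφ.T_map_one_cross h2 h3, S.T_eq_T_one_mul_T_one_sub x (S.sharp y),
    _root_.map_sub, map_mul, S.cross_comm x]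
  ring

theorem N_map (hφ : S.IsAutotopy σ φ) (h2 : IsUnit (2 : K)) (h3 : IsUnit (3 : K)) (a : J) :
    S.N (φ a) = S.N (φ S.one) * σ (S.N a) := by
  have h := hφ.T_map_sharp_map h2 h3 a a
  rw [S.T_sharp_self h2, S.T_sharp_self h2, map_mul, map_ofNat] at h
  exact h3.mul_left_cancel (by linear_combination h)

theorem T_map_U_sharp_map (hφ : S.IsAutotopy σ φ) (h2 : IsUnit (2 : K)) (h3 : IsUnit (3 : K))
    (p q : J) :
    S.T (φ q) (S.U (S.sharp (φ S.one)) (φ p)) = S.N (φ S.one) ^ 2 * σ (S.T q p) := by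
  rw [S.T_U_sharp, S.T_symm _ (φ p), hφ.T_map_sharp_one h2 h3, S.T_symm _ (φ q),
    hφ.T_map_sharp_one h2 h3, S.T_cross_rotate, hφ.T_map_one_cross h2 h3,
    S.T_eq_T_one_mul_T_one_sub q p, _root_.map_sub, map_mul, S.cross_comm q]
  ring

theorem T_adjoint (hφ : S.IsAutotopy σ φ) (h2 : IsUnit (2 : K)) (h3 : IsUnit (3 : K))
    (hsurj : Function.Surjective φ) (a b : J) :
    σ (S.T (Function.invFun φ (S.U (φ S.one) a)) b) = S.T a (φ b) := by
  have h := hφ.T_map_U_sharp_map h2 h3 b (Function.invFun φ (S.U (φ S.one) a))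
  rw [S.T_U_comm, Function.rightInverse_invFun hsurj, S.T_U_sharp_U h2 h3 hφ.isUnit_N_map_one]
    at h
  exact ((hφ.isUnit_N_map_one.pow 2).mul_left_cancel h).symm

end IsAutotopy

end CubicNormStructure

/-- Proposition 2.5 (i), (ii): for a `σ`-semilinear autotopy `φ` with `δ = N(φ(1))`
and adjoint `φ̌ = φ⁻¹ ∘ U_{φ(1)}`, one has `N(φ(a)) = δ·σ(N(a))` and
`σ(T(φ̌(a), b)) = T(a, φ(b))`. -/
theorem stmt6 {F : Type*} [Field F] (h2 : (2 : F) ≠ 0) (h3 : (3 : F) ≠ 0)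
    {K : Type*} [CommRing K] [Algebra F K]
    {J : Type*} [AddCommGroup J] [Module K J]
    (S : CubicNormStructure K J)
    (σ : K ≃+* K) (φ : J → J)
    (hbij : Function.Bijective φ)
    (hadd : ∀ a b : J, φ (a + b) = φ a + φ b)
    (hsemi : ∀ (t : K) (a : J), φ (t • a) = σ t • φ a)
    (hinv : IsUnit (S.N (φ S.one)))
    (haut : ∀ a : J, φ (S.sharp a) =
      Ring.inverse (S.N (φ S.one)) • S.U (φ S.one) (S.sharp (φ a)))
    (a b : J) :
    S.N (φ a) = S.N (φ S.one) * σ (S.N a) ∧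
    σ (S.T (Function.invFun φ (S.U (φ S.one) a)) b) = S.T a (φ b) := by
  have h2K : IsUnit (2 : K) := map_ofNat (algebraMap F K) 2 ▸ h2.isUnit.map (algebraMap F K)
  have h3K : IsUnit (3 : K) := map_ofNat (algebraMap F K) 3 ▸ h3.isUnit.map (algebraMap F K)
  have hφ : S.IsAutotopy σ φ := ⟨hadd, hsemi, hinv, haut⟩
  exact ⟨hφ.N_map h2K h3K a, hφ.T_adjoint h2K h3K hbij.surjective a b⟩
end

section
/- If T is nondegenerate (i.e., T(b, c) = 0 for all c ∈ J implies b = 0), then the algebra A is simple: every F-subspace I ⊆ A satisfying A·I ⊆ I, I·A ⊆ I, and Ī = I is equal to 0 or to A. -/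
section AAlgebra

variable {K : Type*} [CommRing K] {J : Type*} [AddCommGroup J] [Module K J]

/-- The multiplication of the algebra `A = K ⊕ J` of Theorem 3.3:
`(s,b)(t,c) = (st + T(b, φ(c)), s•c + σ(t)•b + γ•(φ(b) × φ(c)))`. -/
def Amul (S : CubicNormStructure K J) (σ : K → K) (φ : J → J) (γ : K)
    (x y : K × J) : K × J :=
  (x.1 * y.1 + S.T x.2 (φ y.2),
    x.1 • y.2 + σ y.1 • x.2 + γ • S.cross (φ x.2) (φ y.2))

/-- The involution of `A = K ⊕ J`: `(s,b)‾ = (σ(s), b)`. -/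
def Abar (σ : K → K) (x : K × J) : K × J := (σ x.1, x.2)

end AAlgebra

/-- The operator `V_{x,y}(z) = (x·ȳ)·z + (z·ȳ)·x − (z·x̄)·y`. -/
def AV {A : Type*} [AddCommGroup A] (mul : A → A → A) (bar : A → A)
    (x y z : A) : A :=
  mul (mul x (bar y)) z + mul (mul z (bar y)) x - mul (mul z (bar x)) y

/-- `A`, equipped with the bilinear multiplication `mul`, unit `one` and
`F`-linear involution `bar`, is a structurable `F`-algebra: `bar` is an additive,
`F`-linear involution with `(xy)‾ = ȳ x̄`, `mul` is `F`-bilinear with unit `one`,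
and the structurable identity `[V_{x,y}, V_{z,w}] = V_{V_{x,y}z, w} − V_{z, V_{y,x}w}`
holds (stated pointwise). -/
def IsStructurable (F : Type*) [Field F] {A : Type*} [AddCommGroup A] [Module F A]
    (mul : A → A → A) (bar : A → A) (one : A) : Prop :=
  (∀ x y, bar (x + y) = bar x + bar y) ∧
  (∀ (c : F) (x), bar (c • x) = c • bar x) ∧
  (∀ x, bar (bar x) = x) ∧
  (∀ x y, bar (mul x y) = mul (bar y) (bar x)) ∧
  (∀ x y z, mul (x + y) z = mul x z + mul y z) ∧
  (∀ x y z, mul x (y + z) = mul x y + mul x z) ∧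
  (∀ (c : F) (x y), mul (c • x) y = c • mul x y) ∧
  (∀ (c : F) (x y), mul x (c • y) = c • mul x y) ∧
  (∀ x, mul one x = x ∧ mul x one = x) ∧
  (∀ x y z w v,
    AV mul bar x y (AV mul bar z w v) - AV mul bar z w (AV mul bar x y v) =
    AV mul bar (AV mul bar x y z) w v - AV mul bar z (AV mul bar y x w) v)

/-- The skew elements of `(A, bar)` form a one-dimensional `F`-subspace. -/
def SkewDimOne (F : Type*) [Field F] {A : Type*} [AddCommGroup A] [Module F A]
    (bar : A → A) : Prop :=
  ∃ s₀ : A, bar s₀ = -s₀ ∧ s₀ ≠ 0 ∧ ∀ x, bar x = -x → ∃ c : F, x = c • s₀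

/-!
Left multiplication by `(t, 0)` acts on `(s, b)` as `(t s, t b)`, right multiplication as
`(s t, σ(t) b)`. Taking `t` with `σ(t) ≠ t`, the difference of the two isolates the `J`-part
of any element of an ideal, so ideals are graded. The scalar part of an ideal is a σ-stable
ideal of the reduced algebra `K`, hence `0` or `K`, and `(1, 0) ∈ I` forces `I = A`. Finally,
if `(0, b) ∈ I` with `b ≠ 0`, nondegeneracy of `T` and surjectivity of `φ` give `c` with
`(0, b)·(0, c)` of nonzero scalar part `T(b, φ c)`.
-/

namespace CubicNormStructure

variable {K : Type*} [CommRing K] {J : Type*} [AddCommGroup J] [Module K J]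
  (S : CubicNormStructure K J)

theorem sharp_zero : S.sharp 0 = 0 := by
  simpa using S.sharp_smul 0 0

theorem T_zero_left (c : J) : S.T 0 c = 0 := by
  simpa using S.T_smul_left 0 c c

theorem T_zero_right (c : J) : S.T c 0 = 0 := by
  rw [S.T_symm, T_zero_left]

theorem cross_zero_left (a : J) : S.cross 0 a = 0 := by
  simp [cross, sharp_zero]

theorem cross_zero_right (a : J) : S.cross a 0 = 0 := by
  simp [cross, sharp_zero]

end CubicNormStructure

section Involution

variable {F : Type*} [Field F] {K : Type*} [CommRing K] [Algebra F K] (σ : K ≃ₐ[F] K)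

theorem exists_map_ne_self_of_one_lt_finrank (hK : 1 < Module.finrank F K)
    (hfix : ∀ t : K, σ t = t → ∃ c : F, t = algebraMap F K c) : ∃ t : K, σ t ≠ t := by
  by_contra! h
  have hsurj : Function.Surjective (Algebra.linearMap F K) := fun t ↦ by
    obtain ⟨c, hc⟩ := hfix t (h t)
    exact ⟨c, hc.symm⟩
  have : Module.finrank F K ≤ 1 :=
    calc Module.finrank F K
        = Module.finrank F (LinearMap.range (Algebra.linearMap F K)) := by
          rw [LinearMap.range_eq_top.mpr hsurj, finrank_top]
      _ ≤ Module.finrank F F := LinearMap.finrank_range_le _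
      _ = 1 := Module.finrank_self F
  omega

variable (hσσ : ∀ t : K, σ (σ t) = t)
  (hfix : ∀ t : K, σ t = t → ∃ c : F, t = algebraMap F K c)
include hσσ hfix

theorem isUnit_of_mul_map_ne_zero {t : K} (ht : t * σ t ≠ 0) : IsUnit t := by
  obtain ⟨c, hc⟩ := hfix (t * σ t) (by rw [map_mul, hσσ, mul_comm])
  have hc0 : c ≠ 0 := by rintro rfl; exact ht (by simp [hc])
  refine IsUnit.of_mul_eq_one (algebraMap F K c⁻¹ * σ t) ?_
  rw [mul_left_comm, hc, ← map_mul, inv_mul_cancel₀ hc0, map_one]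

theorem Ideal.eq_top_of_map_mem_of_ne_zero (hred : ∀ t : K, t * t = 0 → t = 0)
    (P : Ideal K) (hP : ∀ t ∈ P, σ t ∈ P) {u : K} (hu : u ∈ P) (hu0 : u ≠ 0) : P = ⊤ := by
  by_cases hnorm : u * σ u = 0
  -- then the trace `u + σ u` is a nonzero scalar, as `u * u = u * (u + σ u) - u * σ u`
  · obtain ⟨a, ha⟩ := hfix (u + σ u) (by rw [map_add, hσσ, add_comm])
    have ha0 : a ≠ 0 := by
      rintro rfl
      refine hu0 (hred u ?_)
      linear_combination u * (by simpa using ha : u + σ u = 0) - hnorm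
    rw [Ideal.eq_top_iff_one]
    have h1 : algebraMap F K a⁻¹ * (u + σ u) = 1 := by
      rw [ha, ← map_mul, inv_mul_cancel₀ ha0, map_one]
    exact h1 ▸ P.mul_mem_left _ (P.add_mem hu (hP u hu))
  · exact Ideal.eq_top_of_isUnit_mem P hu (isUnit_of_mul_map_ne_zero σ hσσ hfix hnorm)

theorem isUnit_sub_map (hred : ∀ t : K, t * t = 0 → t = 0) {t : K} (ht : σ t ≠ t) :
    IsUnit (t - σ t) := by
  apply isUnit_of_mul_map_ne_zero σ hσσ hfix
  intro h
  rw [map_sub, hσσ] at h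
  have hsq : (t - σ t) * (t - σ t) = 0 := by linear_combination -h
  exact ht (sub_eq_zero.mp (hred _ hsq)).symm

end Involution

section StructurableAlgebra

variable {K : Type*} [CommRing K] {J : Type*} [AddCommGroup J] [Module K J]
  (S : CubicNormStructure K J) {φ : J → J} (hφ0 : φ 0 = 0) (σ : K → K) (γ : K)
include hφ0

theorem Amul_mk_zero_left (t s : K) (b : J) :
    Amul S σ φ γ (t, 0) (s, b) = (t * s, t • b) := by
  simp [Amul, hφ0, S.T_zero_left, S.cross_zero_left]

theorem Amul_mk_zero_right (s : K) (b : J) (t : K) :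
    Amul S σ φ γ (s, b) (t, 0) = (s * t, σ t • b) := by
  simp [Amul, hφ0, S.T_zero_right, S.cross_zero_right]

end StructurableAlgebra

section Ideals

variable {F : Type*} [Field F] {K : Type*} [CommRing K] [Algebra F K] (σ : K ≃ₐ[F] K)
  {J : Type*} [AddCommGroup J] [Module K J] [Module F J]
  (S : CubicNormStructure K J) {φ : J → J} (hφ0 : φ 0 = 0) (γ : K)
  (hσσ : ∀ t : K, σ (σ t) = t)
  (hfix : ∀ t : K, σ t = t → ∃ c : F, t = algebraMap F K c)
  (hred : ∀ t : K, t * t = 0 → t = 0)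
  {I : Submodule F (K × J)} (hIl : ∀ x ∈ I, ∀ y : K × J, Amul S (⇑σ) φ γ y x ∈ I)
include hφ0 hσσ hfix hred hIl

theorem eq_top_of_mk_zero_mem (hIbar : ∀ x ∈ I, Abar (⇑σ) x ∈ I) {u : K}
    (hu : ((u, 0) : K × J) ∈ I) (hu0 : u ≠ 0) : I = ⊤ := by
  let P : Ideal K :=
    { carrier := {t | ((t, 0) : K × J) ∈ I}
      add_mem' := fun ha hb ↦ by simpa using I.add_mem ha hb
      zero_mem' := I.zero_mem
      smul_mem' := fun c t ht ↦ by
        simpa [Amul_mk_zero_left S hφ0] using hIl _ ht (c, 0) }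
  have hP : P = ⊤ := Ideal.eq_top_of_map_mem_of_ne_zero σ hσσ hfix hred P
    (fun t ht ↦ hIbar (t, 0) ht) hu hu0
  have hone : ((1, 0) : K × J) ∈ I := P.eq_top_iff_one.mp hP
  rw [Submodule.eq_top_iff']
  intro x
  simpa [Amul_mk_zero_right S hφ0] using hIl _ hone x

theorem mk_fst_zero_mem
    (hIr : ∀ x ∈ I, ∀ y : K × J, Amul S (⇑σ) φ γ x y ∈ I)
    {t₀ : K} (ht₀ : σ t₀ ≠ t₀) {x : K × J} (hx : x ∈ I) : ((x.1, 0) : K × J) ∈ I := by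
  obtain ⟨s, b⟩ := x
  have hcomm : ((0, (t₀ - σ t₀) • b) : K × J) ∈ I := by
    have h := I.sub_mem (hIl _ hx (t₀, 0)) (hIr _ hx (t₀, 0))
    rw [Amul_mk_zero_left S hφ0, Amul_mk_zero_right S hφ0] at h
    simpa [mul_comm, sub_smul] using h
  obtain ⟨v, hv⟩ := (isUnit_sub_map σ hσσ hfix hred ht₀).exists_left_inv
  have hb : ((0, b) : K × J) ∈ I := by
    simpa [Amul_mk_zero_left S hφ0, smul_smul, hv] using hIl _ hcomm (v, 0)
  simpa using I.sub_mem hx hb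

end Ideals

theorem stmt11_general {F : Type*} [Field F]
    {K : Type*} [CommRing K] [Algebra F K]
    (hdim : Module.finrank F K = 2)
    (hred : ∀ t : K, t * t = 0 → t = 0)
    (σ : K ≃ₐ[F] K)
    (hσσ : ∀ t : K, σ (σ t) = t)
    (hfix : ∀ t : K, σ t = t ↔ ∃ c : F, t = algebraMap F K c)
    {J : Type*} [AddCommGroup J] [Module K J] [Module F J]
    (S : CubicNormStructure K J)
    (φ : J → J)
    (hbij : Function.Bijective φ)
    (hsemi : ∀ (t : K) (a : J), φ (t • a) = σ t • φ a)
    (γ : K)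
    (hT : ∀ b : J, (∀ c : J, S.T b c = 0) → b = 0)
    (I : Submodule F (K × J))
    (hIl : ∀ x ∈ I, ∀ y : K × J, Amul S (⇑σ) φ γ y x ∈ I)
    (hIr : ∀ x ∈ I, ∀ y : K × J, Amul S (⇑σ) φ γ x y ∈ I)
    (hIbar : ∀ x ∈ I, Abar (⇑σ) x ∈ I) :
    I = ⊥ ∨ I = ⊤ := by
  have hφ0 : φ 0 = 0 := by simpa using hsemi 0 0
  replace hfix : ∀ t : K, σ t = t → ∃ c : F, t = algebraMap F K c := fun t ↦ (hfix t).mp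
  obtain ⟨t₀, ht₀⟩ := exists_map_ne_self_of_one_lt_finrank σ (by omega) hfix
  have hscalar {u : K} (hu : ((u, 0) : K × J) ∈ I) (hu0 : u ≠ 0) : I = ⊤ :=
    eq_top_of_mk_zero_mem σ S hφ0 γ hσσ hfix hred hIl hIbar hu hu0
  have hfst {x : K × J} (hx : x ∈ I) : ((x.1, 0) : K × J) ∈ I :=
    mk_fst_zero_mem σ S hφ0 γ hσσ hfix hred hIl hIr ht₀ hx
  refine or_iff_not_imp_left.mpr fun hbot ↦ ?_
  obtain ⟨⟨s, b⟩, hx, hx0⟩ := (Submodule.ne_bot_iff I).mp hbot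
  by_cases hs : s = 0
  · subst hs
    obtain ⟨c, hc⟩ : ∃ c, S.T b c ≠ 0 := by
      by_contra! h
      exact hx0 (by simp [hT b h])
    obtain ⟨c, rfl⟩ := hbij.2 c
    have hprod := hfst (hIr _ hx (0, c))
    exact hscalar hprod (by simpa [Amul] using hc)
  · exact hscalar (hfst hx) hs

/-- If `T` is nondegenerate, then the structurable algebra `A = K ⊕ J` is simple:
every `F`-subspace `I` with `A·I ⊆ I`, `I·A ⊆ I` and `Ī = I` is `0` or `A`. -/
theorem stmt11 {F : Type*} [Field F] (h2 : (2 : F) ≠ 0) (h3 : (3 : F) ≠ 0)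
    {K : Type*} [CommRing K] [Algebra F K]
    (hdim : Module.finrank F K = 2)
    (hred : ∀ t : K, t * t = 0 → t = 0)
    (σ : K ≃ₐ[F] K)
    (hσσ : ∀ t : K, σ (σ t) = t)
    (hfix : ∀ t : K, σ t = t ↔ ∃ c : F, t = algebraMap F K c)
    {J : Type*} [AddCommGroup J] [Module K J] [Module F J] [IsScalarTower F K J]
    (S : CubicNormStructure K J)
    (φ : J → J)
    (hbij : Function.Bijective φ)
    (hadd : ∀ a b : J, φ (a + b) = φ a + φ b)
    (hsemi : ∀ (t : K) (a : J), φ (t • a) = σ t • φ a)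
    (hinv : IsUnit (S.N (φ S.one)))
    (haut : ∀ a : J, φ (S.sharp a) =
      Ring.inverse (S.N (φ S.one)) • S.U (φ S.one) (S.sharp (φ a)))
    (hself : ∀ b : J, φ (φ b) = S.U (φ S.one) b)
    (γ : K) (hγ : γ * σ γ = Ring.inverse (S.N (φ S.one)))
    (hT : ∀ b : J, (∀ c : J, S.T b c = 0) → b = 0)
    (I : Submodule F (K × J))
    (hIl : ∀ x ∈ I, ∀ y : K × J, Amul S (⇑σ) φ γ y x ∈ I)
    (hIr : ∀ x ∈ I, ∀ y : K × J, Amul S (⇑σ) φ γ x y ∈ I)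
    (hIbar : ∀ x ∈ I, Abar (⇑σ) x ∈ I) :
    I = ⊥ ∨ I = ⊤ :=
  stmt11_general hdim hred σ hσσ hfix S φ hbij hsemi γ hT I hIl hIr hIbar
end
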